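/- arXiv:2010.03313 — 3 statements merged into one kernel-verified Lean document; each statement's English description precedes it below -/
import Mathlib

section
/- Associativity of generic tensor multiplication: let s1, s2, s3, s4 be index sets with s3 ⊆ s1 ∪ s2 and s4 ∩ (s1 ∪ s2) = ∅. Then for every tensor A with index set s1, every tensor B with index set s2s4, and every tensor C with index set s4, it holds that (A *_{(s1, s2s4, s3s4)} B) *_{(s3s4, s4, s3)} C = A *_{(s1, s2, s3)} (B *_{(s2s4, s4, s2)} C). -/
open Filter

/-- A function `A` on full index assignments is a *tensor with index set `s`* if it only
depends on the values of the indices in `s`. -/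
def TensorDependsOn {ι : Type*} (d : ι → ℕ) (s : Finset ι) (A : (∀ i, Fin (d i)) → ℝ) : Prop :=
  ∀ a b : ∀ i, Fin (d i), (∀ i ∈ s, a i = b i) → A a = A b

/-- Generic tensor multiplication `A *_{(s1,s2,s3)} B`: the entry of the result at an
assignment `a` is the sum over all assignments of the indices in `(s1 ∪ s2) \ s3` of the
product of the corresponding entries of `A` and `B`. -/
noncomputable def tmul {ι : Type*} [Fintype ι] [DecidableEq ι] (d : ι → ℕ)
    (s1 s2 s3 : Finset ι) (A B : (∀ i, Fin (d i)) → ℝ) : (∀ i, Fin (d i)) → ℝ :=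
  fun a => ∑ b : ∀ i, Fin (d i),
    if (∀ i, i ∉ (s1 ∪ s2) \ s3 → b i = a i) then A b * B b else 0

/-- The Euclidean/Frobenius norm `√(∑_s A[s]²)` of a tensor with index set `s`:
the sum ranges over the assignments of the indices in `s` (indices outside `s` are
pinned to the value `0`). -/
noncomputable def tnorm {ι : Type*} [Fintype ι] [DecidableEq ι] (d : ι → ℕ)
    [∀ i, NeZero (d i)] (s : Finset ι) (A : (∀ i, Fin (d i)) → ℝ) : ℝ :=
  Real.sqrt (∑ a : ∀ i, Fin (d i), if (∀ i, i ∉ s → a i = 0) then A a ^ 2 else 0)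

/-- Fréchet derivative (Definition 1): a function `f` from tensors with index set `sx` to
tensors with index set `sy` has derivative tensor `D` (with index set `sy ∪ sx`) at `x` if
`‖f(x+h) − f(x) − D ∘ h‖ / ‖h‖ → 0` as the tensor `h` (with index set `sx`) tends to `0`,
where `D ∘ h = D *_{(sy sx, sx, sy)} h`. -/
noncomputable def HasDerivTensor {ι : Type*} [Fintype ι] [DecidableEq ι] (d : ι → ℕ)
    [∀ i, NeZero (d i)] (sx sy : Finset ι)
    (f : ((∀ i, Fin (d i)) → ℝ) → ((∀ i, Fin (d i)) → ℝ))
    (x D : (∀ i, Fin (d i)) → ℝ) : Prop :=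
  Tendsto
    (fun h => tnorm d sy (f (x + h) - f x - tmul d (sy ∪ sx) sx sy D h) / tnorm d sx h)
    (nhdsWithin 0 {h | TensorDependsOn d sx h ∧ h ≠ 0}) (nhds 0)

/-- Associativity of generic tensor multiplication (Lemma 1): if `s3 ⊆ s1 ∪ s2` and
`s4 ∩ (s1 ∪ s2) = ∅`, then for every tensor `A` with index set `s1`, every tensor `B`
with index set `s2s4`, and every tensor `C` with index set `s4`,
`(A *_(s1, s2s4, s3s4) B) *_(s3s4, s4, s3) C = A *_(s1, s2, s3) (B *_(s2s4, s4, s2) C)`. -/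
theorem tmul_assoc {ι : Type*} [Fintype ι] [DecidableEq ι] (d : ι → ℕ)
    [∀ i, NeZero (d i)] (s1 s2 s3 s4 : Finset ι)
    (h3 : s3 ⊆ s1 ∪ s2) (h4 : s4 ∩ (s1 ∪ s2) = ∅)
    (A B C : (∀ i, Fin (d i)) → ℝ)
    (hA : TensorDependsOn d s1 A) (hB : TensorDependsOn d (s2 ∪ s4) B) (hC : TensorDependsOn d s4 C) :
    tmul d (s3 ∪ s4) s4 s3 (tmul d s1 (s2 ∪ s4) (s3 ∪ s4) A B) C
      = tmul d s1 s2 s3 A (tmul d (s2 ∪ s4) s4 s2 B C) := by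
  classical
  have hd : ∀ i ∈ s4, i ∉ s1 ∪ s2 := by
    intro i hi hi'
    have : i ∈ s4 ∩ (s1 ∪ s2) := Finset.mem_inter.mpr ⟨hi, hi'⟩
    simp [h4] at this
  have hd3 : ∀ i ∈ s4, i ∉ s3 := fun i hi h => hd i hi (h3 h)
  have e1 : (s3 ∪ s4 ∪ s4) \ s3 = s4 := by
    ext i
    have := hd3 i
    simp only [Finset.mem_sdiff, Finset.mem_union]
    tauto
  have e2 : (s1 ∪ (s2 ∪ s4)) \ (s3 ∪ s4) = (s1 ∪ s2) \ s3 := by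
    ext i
    have h1 := hd i
    have h2 := h3 (x := i)
    simp only [Finset.mem_sdiff, Finset.mem_union] at *
    tauto
  have e3 : (s2 ∪ s4 ∪ s4) \ s2 = s4 := by
    ext i
    have h1 := hd i
    simp only [Finset.mem_sdiff, Finset.mem_union] at *
    tauto
  have h44 : ∀ i ∈ s4, i ∉ (s1 ∪ s2) \ s3 := by
    intro i hi h
    exact hd i hi (Finset.mem_sdiff.mp h).1
  funext a
  simp only [tmul, e1, e2, e3]
  have L : ∀ b : ∀ i, Fin (d i),
      (if (∀ i, i ∉ s4 → b i = a i) then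
        (∑ c : ∀ i, Fin (d i), if (∀ i, i ∉ (s1 ∪ s2) \ s3 → c i = b i) then A c * B c else 0)
          * C b
      else 0)
      = ∑ c : ∀ i, Fin (d i),
          if ((∀ i, i ∉ s4 → b i = a i) ∧ (∀ i, i ∉ (s1 ∪ s2) \ s3 → c i = b i)) then
            A c * B c * C b else 0 := by
    intro b
    by_cases hb : ∀ i, i ∉ s4 → b i = a i
    · rw [if_pos hb, Finset.sum_mul]
      refine Finset.sum_congr rfl fun c _ => ?_
      by_cases h2 : ∀ i, i ∉ (s1 ∪ s2) \ s3 → c i = b i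
      · rw [if_pos h2, if_pos ⟨hb, h2⟩]
      · rw [if_neg h2, zero_mul, if_neg (fun h => h2 h.2)]
    · rw [if_neg hb]
      exact (Finset.sum_eq_zero fun c _ => if_neg (fun h => hb h.1)).symm
  have R : ∀ c : ∀ i, Fin (d i),
      (if (∀ i, i ∉ (s1 ∪ s2) \ s3 → c i = a i) then
        A c * (∑ b : ∀ i, Fin (d i), if (∀ i, i ∉ s4 → b i = c i) then B b * C b else 0)
      else 0)
      = ∑ b : ∀ i, Fin (d i),
          if ((∀ i, i ∉ (s1 ∪ s2) \ s3 → c i = a i) ∧ (∀ i, i ∉ s4 → b i = c i)) then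
            A c * (B b * C b) else 0 := by
    intro c
    by_cases hc : ∀ i, i ∉ (s1 ∪ s2) \ s3 → c i = a i
    · rw [if_pos hc, Finset.mul_sum]
      refine Finset.sum_congr rfl fun b _ => ?_
      by_cases h2 : ∀ i, i ∉ s4 → b i = c i
      · rw [if_pos h2, if_pos ⟨hc, h2⟩]
      · rw [if_neg h2, mul_zero, if_neg (fun h => h2 h.2)]
    · rw [if_neg hc]
      exact (Finset.sum_eq_zero fun b _ => if_neg (fun h => hc h.1)).symm
  rw [Finset.sum_congr rfl (fun b _ => L b), Finset.sum_congr rfl (fun c _ => R c),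
    ← Fintype.sum_prod_type' (fun b c : ∀ i, Fin (d i) =>
      if ((∀ i, i ∉ s4 → b i = a i) ∧ (∀ i, i ∉ (s1 ∪ s2) \ s3 → c i = b i)) then
        A c * B c * C b else 0),
    ← Fintype.sum_prod_type' (fun c b : ∀ i, Fin (d i) =>
      if ((∀ i, i ∉ (s1 ∪ s2) \ s3 → c i = a i) ∧ (∀ i, i ∉ s4 → b i = c i)) then
        A c * (B b * C b) else 0)]
  rw [← Finset.sum_filter, ← Finset.sum_filter]
  refine Finset.sum_nbij'
    (fun p => (fun k => if k ∈ s4 then a k else p.2 k, fun k => if k ∈ s4 then p.1 k else p.2 k))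
    (fun q => (fun k => if k ∈ s4 then q.2 k else a k, fun k => if k ∈ s4 then q.2 k else q.1 k))
    ?_ ?_ ?_ ?_ ?_
  · rintro ⟨b, c⟩ hp
    simp only [Finset.mem_filter, Finset.mem_univ, true_and] at hp ⊢
    obtain ⟨hp1, hp2⟩ := hp
    constructor
    · intro i hi
      by_cases h : i ∈ s4
      · simp [h]
      · simp only [if_neg h]
        rw [hp2 i hi, hp1 i h]
    · intro i hi
      simp [hi]
  · rintro ⟨c, b⟩ hq
    simp only [Finset.mem_filter, Finset.mem_univ, true_and] at hq ⊢
    obtain ⟨hq1, hq2⟩ := hq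
    constructor
    · intro i hi
      simp [hi]
    · intro i hi
      by_cases h : i ∈ s4
      · simp [h]
      · simp only [if_neg h]
        exact hq1 i hi
  · rintro ⟨b, c⟩ hp
    simp only [Finset.mem_filter, Finset.mem_univ, true_and] at hp
    obtain ⟨hp1, hp2⟩ := hp
    refine Prod.ext (funext fun i => ?_) (funext fun i => ?_) <;> by_cases h : i ∈ s4
    · simp [h]
    · simp [h, (hp1 i h).symm]
    · simp [h, (hp2 i (h44 i h)).symm]
    · simp [h]
  · rintro ⟨c, b⟩ hq
    simp only [Finset.mem_filter, Finset.mem_univ, true_and] at hq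
    obtain ⟨hq1, hq2⟩ := hq
    refine Prod.ext (funext fun i => ?_) (funext fun i => ?_) <;> by_cases h : i ∈ s4
    · simp [h, (hq1 i (h44 i h)).symm]
    · simp [h]
    · simp [h]
    · simp [h, (hq2 i h).symm]
  · rintro ⟨b, c⟩ hp
    simp only [Finset.mem_filter, Finset.mem_univ, true_and] at hp
    obtain ⟨hp1, hp2⟩ := hp
    have hceq : (fun k => if k ∈ s4 then b k else c k) = c := by
      funext k
      by_cases h : k ∈ s4
      · simp [h, hp2 k (h44 k h)]
      · simp [h]
    simp only [hceq]
    have hAeq : A c = A (fun k => if k ∈ s4 then a k else c k) := by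
      apply hA
      intro i hi
      have : i ∉ s4 := fun h => hd i h (Finset.mem_union_left _ hi)
      simp [this]
    have hCeq : C b = C c := by
      apply hC
      intro i hi
      exact (hp2 i (h44 i hi)).symm
    rw [hAeq, hCeq]
    ring
end

section
/- Pushforward of an element-wise unary function node (Theorem 3): let x be an input variable ranging over tensors with index set s2, let f : ℝ → ℝ be a differentiable function with derivative f′, and let A be a tensor-valued function of x with index set s1 having derivative tensor Ȧ (index set s1s2) at x. Let f be applied element-wise to tensors. Then the function C(x) = f(A(x)) (f applied to each entry of A(x)) has derivative tensor Ċ = f′(A(x)) *_{(s1, s1s2, s1s2)} Ȧ at x, where f′(A(x)) denotes f′ applied element-wise to the entries of A(x). -/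
open Filter

section aux
variable {ι : Type*} [Fintype ι] [DecidableEq ι] (d : ι → ℕ) [∀ i, NeZero (d i)]

lemma tnorm_nonneg (s : Finset ι) (u : (∀ i, Fin (d i)) → ℝ) : 0 ≤ tnorm d s u :=
  Real.sqrt_nonneg _

noncomputable def maskE (s : Finset ι) (u : (∀ i, Fin (d i)) → ℝ) :
    EuclideanSpace ℝ (∀ i, Fin (d i)) :=
  WithLp.toLp 2 (fun a => if (∀ i, i ∉ s → a i = 0) then u a else 0)

lemma tnorm_eq_norm (s : Finset ι) (u : (∀ i, Fin (d i)) → ℝ) :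
    tnorm d s u = ‖maskE d s u‖ := by
  rw [EuclideanSpace.norm_eq, tnorm]; simp only [maskE, PiLp.toLp_apply]
  congr 1
  refine Finset.sum_congr rfl fun a _ => ?_
  split <;> simp [Real.norm_eq_abs, sq_abs]

lemma tnorm_add_le (s : Finset ι) (u v : (∀ i, Fin (d i)) → ℝ) :
    tnorm d s (fun a => u a + v a) ≤ tnorm d s u + tnorm d s v := by
  rw [tnorm_eq_norm, tnorm_eq_norm, tnorm_eq_norm]
  have h : maskE d s (fun a => u a + v a) = maskE d s u + maskE d s v := by
    ext a
    show _ = maskE d s u a + maskE d s v a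
    simp only [maskE, PiLp.toLp_apply]
    split <;> simp
  rw [h]
  exact norm_add_le _ _

lemma tnorm_smul (s : Finset ι) (c : ℝ) (u : (∀ i, Fin (d i)) → ℝ) :
    tnorm d s (fun a => c * u a) = |c| * tnorm d s u := by
  rw [tnorm_eq_norm, tnorm_eq_norm]
  have h : maskE d s (fun a => c * u a) = c • maskE d s u := by
    ext a
    show _ = c * maskE d s u a
    simp only [maskE, PiLp.toLp_apply]
    split <;> simp
  rw [h, norm_smul, Real.norm_eq_abs]

lemma tnorm_mono (s : Finset ι) (u v : (∀ i, Fin (d i)) → ℝ)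
    (h : ∀ a, (∀ i, i ∉ s → a i = 0) → |u a| ≤ |v a|) : tnorm d s u ≤ tnorm d s v := by
  apply Real.sqrt_le_sqrt
  apply Finset.sum_le_sum
  intro a _
  by_cases hc : (∀ i, i ∉ s → a i = 0)
  · simp only [if_pos hc]
    calc u a ^ 2 = |u a| ^ 2 := (sq_abs _).symm
    _ ≤ |v a| ^ 2 := pow_le_pow_left₀ (abs_nonneg _) (h a hc) 2
    _ = v a ^ 2 := sq_abs _
  · simp [hc]

lemma abs_le_tnorm (s : Finset ι) (u : (∀ i, Fin (d i)) → ℝ) (a : ∀ i, Fin (d i))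
    (ha : ∀ i, i ∉ s → a i = 0) : |u a| ≤ tnorm d s u := by
  rw [← Real.sqrt_sq_eq_abs]
  apply Real.sqrt_le_sqrt
  calc u a ^ 2 = if (∀ i, i ∉ s → a i = 0) then u a ^ 2 else 0 := by rw [if_pos ha]
  _ ≤ _ := Finset.single_le_sum (f := fun b => if (∀ i, i ∉ s → b i = 0) then u b ^ 2 else 0)
      (fun b _ => by split <;> [exact sq_nonneg _; exact le_rfl]) (Finset.mem_univ a)

lemma tnorm_le_const (s : Finset ι) (u : (∀ i, Fin (d i)) → ℝ) (c : ℝ) (hc : 0 ≤ c)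
    (h : ∀ a, (∀ i, i ∉ s → a i = 0) → |u a| ≤ c) :
    tnorm d s u ≤ Real.sqrt (Fintype.card (∀ i, Fin (d i))) * c := by
  rw [← Real.sqrt_sq hc, ← Real.sqrt_mul (by positivity)]
  apply Real.sqrt_le_sqrt
  calc (∑ a : ∀ i, Fin (d i), if (∀ i, i ∉ s → a i = 0) then u a ^ 2 else 0)
      ≤ ∑ _a : ∀ i, Fin (d i), c ^ 2 := by
        apply Finset.sum_le_sum
        intro a _
        by_cases hc' : (∀ i, i ∉ s → a i = 0)
        · simp only [if_pos hc']
          calc u a ^ 2 = |u a| ^ 2 := (sq_abs _).symm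
          _ ≤ c ^ 2 := pow_le_pow_left₀ (abs_nonneg _) (h a hc') 2
        · simp only [if_neg hc']; positivity
  _ = (Fintype.card (∀ i, Fin (d i)) : ℝ) * c ^ 2 := by
        simp [Finset.sum_const, nsmul_eq_mul, Finset.card_univ]

end aux

set_option maxHeartbeats 1600000 in
/-- Pushforward of an element-wise unary function node (Theorem 3): if `A` is a
tensor-valued function (index set `s1`) of an input tensor variable `x` with index set
`s2` having derivative tensor `Adot` at `x`, and `f : ℝ → ℝ` is differentiable with
derivative `f′`, then `C(x) = f(A(x))` (with `f` applied element-wise) has derivative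
tensor `f′(A(x)) *_(s1, s1s2, s1s2) Adot` at `x`, where `f′(A(x))` is `f′` applied
element-wise to the entries of `A(x)`. -/
theorem pushforward_elementwise {ι : Type*} [Fintype ι] [DecidableEq ι] (d : ι → ℕ)
    [∀ i, NeZero (d i)] (s1 s2 : Finset ι) (h12 : s1 ∩ s2 = ∅)
    (f f' : ℝ → ℝ) (hf : ∀ t, HasDerivAt f (f' t) t)
    (A : ((∀ i, Fin (d i)) → ℝ) → ((∀ i, Fin (d i)) → ℝ))
    (x Adot : (∀ i, Fin (d i)) → ℝ)
    (hx : TensorDependsOn d s2 x) (hA : ∀ y, TensorDependsOn d s1 (A y))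
    (hAdot : TensorDependsOn d (s1 ∪ s2) Adot)
    (hdA : HasDerivTensor d s2 s1 A x Adot) :
    HasDerivTensor d s2 s1 (fun y => fun a => f (A y a)) x
      (tmul d s1 (s1 ∪ s2) (s1 ∪ s2) (fun a => f' (A x a)) Adot) := by
  classical
  haveI hP : Nonempty (∀ i, Fin (d i)) := ⟨fun _ => 0⟩
  have hdisj : ∀ i ∈ s1, i ∉ s2 := by
    intro i h1 h2
    have : i ∈ s1 ∩ s2 := Finset.mem_inter.mpr ⟨h1, h2⟩
    rw [h12] at this
    exact absurd this (Finset.notMem_empty i)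
  have hset1 : ((s1 ∪ s2) ∪ s2) \ s1 = s2 := by
    ext i
    simp only [Finset.mem_sdiff, Finset.mem_union]
    have := hdisj i
    tauto
  -- contraction formula
  have hT : ∀ (D h : (∀ i, Fin (d i)) → ℝ) (a : ∀ i, Fin (d i)),
      tmul d (s1 ∪ s2) s2 s1 D h a
        = ∑ b : ∀ i, Fin (d i), if (∀ i, i ∉ s2 → b i = a i) then D b * h b else 0 := by
    intro D h a
    simp only [tmul, hset1]
  -- Cdot is pointwise multiplication
  have hC : ∀ b : ∀ i, Fin (d i),
      tmul d s1 (s1 ∪ s2) (s1 ∪ s2) (fun a => f' (A x a)) Adot b = f' (A x b) * Adot b := by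
    intro b
    rw [tmul]
    rw [Finset.sum_eq_single b]
    · rw [if_pos (fun i _ => rfl)]
    · intro c _ hcb
      rw [if_neg]
      intro hcond
      refine hcb (funext fun i => hcond i ?_)
      simp only [Finset.mem_sdiff, Finset.mem_union]
      tauto
    · intro habs
      exact absurd (Finset.mem_univ b) habs
  -- key identity: (Cdot ∘ h) a = f'(A x a) * (Adot ∘ h) a
  have hkey : ∀ (h : (∀ i, Fin (d i)) → ℝ) (a : ∀ i, Fin (d i)),
      tmul d (s1 ∪ s2) s2 s1
          (tmul d s1 (s1 ∪ s2) (s1 ∪ s2) (fun a => f' (A x a)) Adot) h a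
        = f' (A x a) * tmul d (s1 ∪ s2) s2 s1 Adot h a := by
    intro h a
    rw [hT, hT, Finset.mul_sum]
    refine Finset.sum_congr rfl fun b _ => ?_
    by_cases hb : ∀ i, i ∉ s2 → b i = a i
    · rw [if_pos hb, if_pos hb, hC]
      have hxb : A x b = A x a := hA x b a fun i hi => hb i (hdisj i hi)
      rw [hxb]; ring
    · rw [if_neg hb, if_neg hb, mul_zero]
  -- pointwise bound on entries of h
  have habs : ∀ h : (∀ i, Fin (d i)) → ℝ, TensorDependsOn d s2 h →
      ∀ b, |h b| ≤ tnorm d s2 h := by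
    intro h hdep b
    have hproj : h b = h (fun i => if i ∈ s2 then b i else 0) :=
      hdep b _ (fun i hi => by simp [hi])
    rw [hproj]
    exact abs_le_tnorm d s2 h _ (fun i hi => by simp [hi])
  -- constants
  obtain ⟨K, hK⟩ : ∃ K : ℝ, K = ∑ b : ∀ i, Fin (d i), |Adot b| := ⟨_, rfl⟩
  have hK0 : 0 ≤ K := hK ▸ Finset.sum_nonneg fun b _ => abs_nonneg _
  have hAdoth : ∀ h : (∀ i, Fin (d i)) → ℝ, TensorDependsOn d s2 h →
      ∀ a, |tmul d (s1 ∪ s2) s2 s1 Adot h a| ≤ K * tnorm d s2 h := by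
    intro h hdep a
    rw [hT, hK]
    calc |∑ b : ∀ i, Fin (d i), if (∀ i, i ∉ s2 → b i = a i) then Adot b * h b else 0|
        ≤ ∑ b : ∀ i, Fin (d i), |if (∀ i, i ∉ s2 → b i = a i) then Adot b * h b else 0| :=
          Finset.abs_sum_le_sum_abs _ _
    _ ≤ ∑ b : ∀ i, Fin (d i), |Adot b| * tnorm d s2 h := by
          apply Finset.sum_le_sum
          intro b _
          by_cases hb : ∀ i, i ∉ s2 → b i = a i
          · rw [if_pos hb, abs_mul]
            exact mul_le_mul_of_nonneg_left (habs h hdep b) (abs_nonneg _)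
          · rw [if_neg hb, abs_zero]
            exact mul_nonneg (abs_nonneg _) (tnorm_nonneg d s2 h)
    _ = (∑ b : ∀ i, Fin (d i), |Adot b|) * tnorm d s2 h := (Finset.sum_mul _ _ _).symm
  -- positivity of the denominator
  have hpos : ∀ h : (∀ i, Fin (d i)) → ℝ, TensorDependsOn d s2 h → h ≠ 0 →
      0 < tnorm d s2 h := by
    intro h hdep hne
    obtain ⟨b, hb⟩ : ∃ b, h b ≠ 0 := by
      by_contra hcon
      push_neg at hcon
      exact hne (funext hcon)
    exact lt_of_lt_of_le (abs_pos.mpr hb) (habs h hdep b)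
  -- uniform differentiability of f at the values of A x
  have hunif : ∀ ε' : ℝ, 0 < ε' → ∃ δ > 0, ∀ a : ∀ i, Fin (d i), ∀ u : ℝ, |u| < δ →
      |f (A x a + u) - f (A x a) - f' (A x a) * u| ≤ ε' * |u| := by
    intro ε' hε'
    have H : ∀ a : ∀ i, Fin (d i), ∃ δ > 0, ∀ u : ℝ, |u| < δ →
        |f (A x a + u) - f (A x a) - f' (A x a) * u| ≤ ε' * |u| := by
      intro a
      have h1 : (fun u => f (A x a + u) - f (A x a) - u • f' (A x a)) =o[nhds 0]
          fun u : ℝ => u := hasDerivAt_iff_isLittleO_nhds_zero.mp (hf (A x a))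
      have h2 := h1.def hε'
      rw [Metric.eventually_nhds_iff] at h2
      obtain ⟨δ, hδ, h3⟩ := h2
      refine ⟨δ, hδ, fun u hu => ?_⟩
      have h4 := h3 (y := u) (by simpa [Real.dist_eq] using hu)
      simpa [Real.norm_eq_abs, smul_eq_mul, mul_comm] using h4
    choose δf hδ1 hδ2 using H
    refine ⟨Finset.univ.inf' Finset.univ_nonempty δf, ?_, ?_⟩
    · show 0 < _
      rw [Finset.lt_inf'_iff]
      exact fun a _ => hδ1 a
    · intro a u hu
      exact hδ2 a u (hu.trans_le (Finset.inf'_le _ (Finset.mem_univ a)))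
  obtain ⟨M, hM⟩ : ∃ M : ℝ, M = ∑ a : ∀ i, Fin (d i), |f' (A x a)| := ⟨_, rfl⟩
  have hM0 : 0 ≤ M := hM ▸ Finset.sum_nonneg fun a _ => abs_nonneg _
  have hMle : ∀ a, |f' (A x a)| ≤ M := fun a => hM ▸
    Finset.single_le_sum (f := fun a => |f' (A x a)|)
      (fun b _ => abs_nonneg _) (Finset.mem_univ a)
  obtain ⟨sc, hsc⟩ : ∃ sc : ℝ, sc = Real.sqrt (Fintype.card (∀ i, Fin (d i))) := ⟨_, rfl⟩
  have hsc0 : 0 ≤ sc := hsc ▸ Real.sqrt_nonneg _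
  obtain ⟨B, hB⟩ : ∃ B : ℝ, B = sc * K + 1 := ⟨_, rfl⟩
  have hB0 : 0 < B := by nlinarith [mul_nonneg hsc0 hK0]
  -- the limit
  unfold HasDerivTensor
  rw [Metric.tendsto_nhds]
  intro ε hε
  have hεB : (0:ℝ) < ε / (4 * B) := div_pos hε (by linarith)
  obtain ⟨δ, hδ0, hδ⟩ := hunif (ε / (4 * B)) hεB
  obtain ⟨ε₁, hε₁⟩ : ∃ e : ℝ, e = min 1 (ε / (2 * (M + 1))) := ⟨_, rfl⟩
  have hM1 : (0:ℝ) < M + 1 := by linarith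
  have hε₁0 : 0 < ε₁ := hε₁ ▸ lt_min one_pos (div_pos hε (by linarith))
  have hε₁1 : ε₁ ≤ 1 := hε₁ ▸ min_le_left _ _
  have hε₁2 : ε₁ ≤ ε / (2 * (M + 1)) := hε₁ ▸ min_le_right _ _
  -- eventually: the residual of A is small
  unfold HasDerivTensor at hdA
  rw [Metric.tendsto_nhds] at hdA
  have hq := hdA ε₁ hε₁0
  have h1K : (0:ℝ) < 1 + K := by linarith
  -- eventually: tnorm of h is small
  have hsmall : ∀ᶠ h in nhdsWithin 0 {h | TensorDependsOn d s2 h ∧ h ≠ 0},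
      tnorm d s2 h < δ / (1 + K) := by
    have hcont : Continuous fun h : (∀ i, Fin (d i)) → ℝ => tnorm d s2 h := by
      unfold tnorm
      apply Real.continuous_sqrt.comp
      apply continuous_finset_sum
      intro a _
      by_cases hc : ∀ i, i ∉ s2 → a i = 0
      · simp only [if_pos hc]
        exact (continuous_apply a).pow 2
      · simp only [if_neg hc]
        exact continuous_const
    have h0 : tnorm d s2 (0 : (∀ i, Fin (d i)) → ℝ) = 0 := by
      simp [tnorm]
    have htend : Tendsto (fun h : (∀ i, Fin (d i)) → ℝ => tnorm d s2 h)
        (nhdsWithin 0 {h | TensorDependsOn d s2 h ∧ h ≠ 0}) (nhds 0) := by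
      rw [← h0]
      exact (hcont.tendsto 0).mono_left nhdsWithin_le_nhds
    have := (Metric.tendsto_nhds.mp htend) (δ / (1 + K)) (div_pos hδ0 h1K)
    filter_upwards [this] with h hh
    rw [Real.dist_eq, sub_zero] at hh
    exact lt_of_le_of_lt (le_abs_self _) hh
  filter_upwards [hq, hsmall, eventually_mem_nhdsWithin] with h hq1 hsm hmem
  obtain ⟨hdep, hne⟩ := hmem
  have hnh : 0 < tnorm d s2 h := hpos h hdep hne
  rw [Real.dist_eq, sub_zero] at hq1 ⊢
  -- notation
  obtain ⟨nh, hnhd⟩ : ∃ n : ℝ, n = tnorm d s2 h := ⟨_, rfl⟩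
  rw [← hnhd] at hnh hq1 hsm ⊢
  obtain ⟨Rf, hRf⟩ : ∃ R : (∀ i, Fin (d i)) → ℝ,
      R = A (x + h) - A x - tmul d (s1 ∪ s2) s2 s1 Adot h := ⟨_, rfl⟩
  rw [← hRf] at hq1
  have hRfa : ∀ a, Rf a = A (x + h) a - A x a - tmul d (s1 ∪ s2) s2 s1 Adot h a := by
    intro a; rw [hRf]; simp
  have hqR : tnorm d s1 Rf / nh < ε₁ := lt_of_le_of_lt (le_abs_self _) hq1
  have hRsmall : tnorm d s1 Rf < ε₁ * nh := (div_lt_iff₀ hnh).mp hqR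
  have hRnn : 0 ≤ tnorm d s1 Rf := tnorm_nonneg d s1 Rf
  -- the function values decompose
  obtain ⟨Δ, hΔa⟩ : ∃ D : (∀ i, Fin (d i)) → ℝ,
      ∀ a, D a = A (x + h) a - A x a := ⟨_, fun a => rfl⟩
  obtain ⟨E, hEa⟩ : ∃ E : (∀ i, Fin (d i)) → ℝ,
      ∀ a, E a = f (A x a + Δ a) - f (A x a) - f' (A x a) * Δ a := ⟨_, fun a => rfl⟩
  have hdecomp : ((fun y => fun a => f (A y a)) (x + h) - (fun y => fun a => f (A y a)) x -
      tmul d (s1 ∪ s2) s2 s1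
        (tmul d s1 (s1 ∪ s2) (s1 ∪ s2) (fun a => f' (A x a)) Adot) h)
      = fun a => E a + f' (A x a) * Rf a := by
    funext a
    show _ = E a + f' (A x a) * Rf a
    simp only [Pi.sub_apply]
    rw [hkey h a, hEa a, hΔa a, hRfa a]
    have hx2 : A x a + (A (x + h) a - A x a) = A (x + h) a := by ring
    rw [hx2]
    ring
  -- bound on Δ pointwise (on masked entries)
  have hΔbound : ∀ a, (∀ i, i ∉ s1 → a i = 0) → |Δ a| < δ := by
    intro a ha
    have h1 : |Δ a| ≤ |Rf a| + |tmul d (s1 ∪ s2) s2 s1 Adot h a| := by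
      have heq : Δ a = Rf a + tmul d (s1 ∪ s2) s2 s1 Adot h a := by
        rw [hΔa a, hRfa a]; ring
      rw [heq]
      exact abs_add_le _ _
    have h2 : |Rf a| ≤ tnorm d s1 Rf := abs_le_tnorm d s1 Rf a ha
    have h3 : |tmul d (s1 ∪ s2) s2 s1 Adot h a| ≤ K * nh := hnhd ▸ hAdoth h hdep a
    calc |Δ a| ≤ |Rf a| + |tmul d (s1 ∪ s2) s2 s1 Adot h a| := h1
    _ ≤ tnorm d s1 Rf + K * nh := add_le_add h2 h3
    _ < ε₁ * nh + K * nh := by linarith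
    _ ≤ 1 * nh + K * nh := by nlinarith
    _ = (1 + K) * nh := by ring
    _ < (1 + K) * (δ / (1 + K)) := by
        exact mul_lt_mul_of_pos_left hsm h1K
    _ = δ := by
        rw [mul_comm, div_mul_cancel₀ δ (ne_of_gt h1K)]
  -- bound tnorm of E
  have hEbound : tnorm d s1 E ≤ (ε / (4 * B)) * tnorm d s1 Δ := by
    have h1 : tnorm d s1 E ≤ tnorm d s1 (fun a => (ε / (4 * B)) * Δ a) := by
      apply tnorm_mono
      intro a ha
      have hd := hδ a (Δ a) (hΔbound a ha)
      calc |E a| ≤ (ε / (4 * B)) * |Δ a| := by rw [hEa a]; exact hd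
      _ = |(ε / (4 * B)) * Δ a| := by
          rw [abs_mul, abs_of_pos hεB]
    rw [tnorm_smul] at h1
    rwa [abs_of_pos hεB] at h1
  -- bound tnorm of Δ
  have hΔnorm : tnorm d s1 Δ ≤ B * nh := by
    have h1 : tnorm d s1 Δ ≤ tnorm d s1 Rf
        + tnorm d s1 (tmul d (s1 ∪ s2) s2 s1 Adot h) := by
      have heq : Δ = fun a => Rf a + tmul d (s1 ∪ s2) s2 s1 Adot h a := by
        funext a; rw [hΔa a, hRfa a]; ring
      rw [heq]
      exact tnorm_add_le d s1 _ _
    have h2 : tnorm d s1 (tmul d (s1 ∪ s2) s2 s1 Adot h) ≤ sc * (K * nh) := by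
      rw [hsc, hnhd]
      exact tnorm_le_const d s1 _ (K * tnorm d s2 h)
        (mul_nonneg hK0 (tnorm_nonneg d s2 h)) (fun a _ => hAdoth h hdep a)
    calc tnorm d s1 Δ ≤ tnorm d s1 Rf + tnorm d s1 (tmul d (s1 ∪ s2) s2 s1 Adot h) := h1
    _ ≤ ε₁ * nh + sc * (K * nh) := by linarith
    _ ≤ 1 * nh + sc * K * nh := by nlinarith
    _ = (sc * K + 1) * nh := by ring
    _ = B * nh := by rw [hB]
  -- bound on the second term
  have hterm2 : tnorm d s1 (fun a => f' (A x a) * Rf a) ≤ M * (ε₁ * nh) := by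
    have h1 : tnorm d s1 (fun a => f' (A x a) * Rf a)
        ≤ tnorm d s1 (fun a => M * Rf a) := by
      apply tnorm_mono
      intro a _
      rw [abs_mul, abs_mul, abs_of_nonneg hM0]
      exact mul_le_mul_of_nonneg_right (hMle a) (abs_nonneg _)
    rw [tnorm_smul, abs_of_nonneg hM0] at h1
    calc tnorm d s1 (fun a => f' (A x a) * Rf a) ≤ M * tnorm d s1 Rf := h1
    _ ≤ M * (ε₁ * nh) := mul_le_mul_of_nonneg_left hRsmall.le hM0
  -- put it together
  have htotal : tnorm d s1 ((fun y => fun a => f (A y a)) (x + h)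
      - (fun y => fun a => f (A y a)) x -
      tmul d (s1 ∪ s2) s2 s1
        (tmul d s1 (s1 ∪ s2) (s1 ∪ s2) (fun a => f' (A x a)) Adot) h)
      < ε * nh := by
    rw [hdecomp]
    have h1 := tnorm_add_le d s1 E (fun a => f' (A x a) * Rf a)
    have h2 : (ε / (4 * B)) * tnorm d s1 Δ ≤ (ε / (4 * B)) * (B * nh) :=
      mul_le_mul_of_nonneg_left hΔnorm hεB.le
    have h3 : (ε / (4 * B)) * (B * nh) = ε / 4 * nh := by
      rw [show (4:ℝ) * B = 4 * B from rfl, div_mul_eq_mul_div, div_mul_eq_mul_div]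
      rw [eq_div_iff (by positivity : (4:ℝ) ≠ 0)]
      field_simp
    have h4 : M * ε₁ ≤ ε / 2 := by
      have h6 : M * ε₁ ≤ M * (ε / (2 * (M + 1))) := mul_le_mul_of_nonneg_left hε₁2 hM0
      have h7 : M * (ε / (2 * (M + 1))) ≤ ε / 2 := by
        have hq0 : (0:ℝ) ≤ ε / (2 * (M + 1)) := le_of_lt (div_pos hε (by linarith))
        have heq2 : ε / (2 * (M + 1)) = ε / 2 / (M + 1) := by rw [div_div]
        calc M * (ε / (2 * (M + 1))) ≤ (M + 1) * (ε / (2 * (M + 1))) := by nlinarith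
        _ = ε / 2 := by
            rw [heq2, mul_comm, div_mul_cancel₀ _ (ne_of_gt hM1)]
      linarith
    have h8 : M * (ε₁ * nh) ≤ ε / 2 * nh := by
      have h9 : M * (ε₁ * nh) = (M * ε₁) * nh := by ring
      rw [h9]
      exact mul_le_mul_of_nonneg_right h4 hnh.le
    calc tnorm d s1 (fun a => E a + f' (A x a) * Rf a)
        ≤ tnorm d s1 E + tnorm d s1 (fun a => f' (A x a) * Rf a) := h1
    _ ≤ (ε / (4 * B)) * tnorm d s1 Δ + M * (ε₁ * nh) := add_le_add hEbound hterm2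
    _ ≤ ε / 4 * nh + ε / 2 * nh := by linarith
    _ < ε * nh := by
        have h10 : ε / 4 * nh + ε / 2 * nh = 3 / 4 * ε * nh := by ring
        have h11 : 3 / 4 * ε * nh < ε * nh := by
          apply mul_lt_mul_of_pos_right _ hnh
          linarith
        linarith
  calc |tnorm d s1 ((fun y => fun a => f (A y a)) (x + h)
      - (fun y => fun a => f (A y a)) x -
      tmul d (s1 ∪ s2) s2 s1
        (tmul d s1 (s1 ∪ s2) (s1 ∪ s2) (fun a => f' (A x a)) Adot) h) / nh|
      = tnorm d s1 _ / nh := abs_of_nonneg (div_nonneg (tnorm_nonneg d s1 _) hnh.le)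
  _ < ε := (div_lt_iff₀ hnh).mpr (by linarith [htotal])
end

section
/- Pullback through a multiplication node, right argument (Theorem 4, first part): let s1, s2 be index sets, s3 ⊆ s1 ∪ s2, and let s4 be an index set disjoint from s1 ∪ s2. Let A be a fixed tensor with index set s1, and let Y be a function from tensors with index set s3 to tensors with index set s4 that has derivative tensor C̄ (index set s4s3) at the point C = A *_{(s1, s2, s3)} B. Then the function B ↦ Y(A *_{(s1, s2, s3)} B) has derivative tensor C̄ *_{(s4s3, s1, s4s2)} A at B. -/
open Filter

section Aux
variable {ι : Type*} [Fintype ι] [DecidableEq ι] {d : ι → ℕ}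

lemma pmr_sum_collapse (t u : Finset ι) (hdisj : ∀ i ∈ t, i ∉ u) (a : ∀ i, Fin (d i))
    (F : (∀ i, Fin (d i)) → (∀ i, Fin (d i)) → ℝ) :
    (∑ b : ∀ i, Fin (d i), ∑ c : ∀ i, Fin (d i),
      if (∀ i, i ∉ t → b i = a i) ∧ (∀ i, i ∉ u → c i = b i) then F b c else 0)
    = ∑ c : ∀ i, Fin (d i), if (∀ i, i ∉ t ∪ u → c i = a i)
        then F (fun i => if i ∈ u then a i else c i) c else 0 := by
  rw [Finset.sum_comm]
  refine Finset.sum_congr rfl fun c _ => ?_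
  by_cases hR : ∀ i, i ∉ t ∪ u → c i = a i
  · rw [if_pos hR, Finset.sum_eq_single (fun i => if i ∈ u then a i else c i)]
    · rw [if_pos]
      constructor
      · intro i hit
        by_cases hiu : i ∈ u
        · simp [hiu]
        · simp only [hiu, if_neg, ite_false]
          exact hR i (by simp [hit, hiu])
      · intro i hiu; simp [hiu]
    · intro b _ hb
      rw [if_neg]
      rintro ⟨h1, h2⟩
      apply hb; funext i
      by_cases hiu : i ∈ u
      · have hit : i ∉ t := fun h => hdisj i h hiu
        simp [hiu, h1 i hit]
      · simp [hiu, (h2 i hiu).symm]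
    · intro h; exact absurd (Finset.mem_univ _) h
  · rw [if_neg hR]
    refine Finset.sum_eq_zero fun b _ => ?_
    rw [if_neg]
    rintro ⟨h1, h2⟩
    exact hR fun i hi => by
      rw [h2 i (fun h => hi (Finset.mem_union_right _ h)),
        h1 i (fun h => hi (Finset.mem_union_left _ h))]

end Aux
section Aux2
variable {ι : Type*} [Fintype ι] [DecidableEq ι] {d : ι → ℕ}

lemma pmr_sum_pinned_congr (U T : Finset ι) (hTU : T ⊆ U) (a a' : ∀ i, Fin (d i))
    (ha : ∀ i ∈ U, i ∉ T → a i = a' i) (G : (∀ i, Fin (d i)) → ℝ)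
    (hG : TensorDependsOn d U G) :
    (∑ b : ∀ i, Fin (d i), if (∀ i, i ∉ T → b i = a i) then G b else 0)
    = ∑ b : ∀ i, Fin (d i), if (∀ i, i ∉ T → b i = a' i) then G b else 0 := by
  rw [← Finset.sum_filter, ← Finset.sum_filter]
  refine Finset.sum_nbij' (fun b => fun i => if i ∈ T then b i else a' i)
    (fun b => fun i => if i ∈ T then b i else a i) ?_ ?_ ?_ ?_ ?_
  · intro b hb
    simp only [Finset.mem_filter, Finset.mem_univ, true_and] at hb ⊢
    intro i hi; simp [hi]
  · intro b hb
    simp only [Finset.mem_filter, Finset.mem_univ, true_and] at hb ⊢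
    intro i hi; simp [hi]
  · intro b hb
    simp only [Finset.mem_filter, Finset.mem_univ, true_and] at hb
    funext i
    by_cases hi : i ∈ T <;> simp [hi, (hb i ·)]
  · intro b hb
    simp only [Finset.mem_filter, Finset.mem_univ, true_and] at hb
    funext i
    by_cases hi : i ∈ T <;> simp [hi, (hb i ·)]
  · intro b hb
    simp only [Finset.mem_filter, Finset.mem_univ, true_and] at hb
    refine hG _ _ fun i hiU => ?_
    by_cases hi : i ∈ T
    · simp [hi]
    · simp [hi, hb i hi, ha i hiU hi]

lemma pmr_tmul_add_right (s1 s2 s3 : Finset ι) (A X Y' : (∀ i, Fin (d i)) → ℝ) :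
    tmul d s1 s2 s3 A (X + Y') = tmul d s1 s2 s3 A X + tmul d s1 s2 s3 A Y' := by
  funext a
  simp only [tmul, Pi.add_apply, ← Finset.sum_add_distrib]
  refine Finset.sum_congr rfl fun b _ => ?_
  split <;> ring

lemma pmr_tmul_zero_right (s1 s2 s3 : Finset ι) (A : (∀ i, Fin (d i)) → ℝ) :
    tmul d s1 s2 s3 A 0 = 0 := by
  funext a; simp [tmul]

lemma pmr_dependsOn_tmul (s1 s2 s3 : Finset ι) (h3 : s3 ⊆ s1 ∪ s2)
    (A h : (∀ i, Fin (d i)) → ℝ) (hA : TensorDependsOn d s1 A) (hh : TensorDependsOn d s2 h) :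
    TensorDependsOn d s3 (tmul d s1 s2 s3 A h) := by
  intro a a' haa
  simp only [tmul]
  refine pmr_sum_pinned_congr (s1 ∪ s2) ((s1 ∪ s2) \ s3) (Finset.sdiff_subset) a a'
    (fun i hiU hiT => ?_) _ (fun b b' hbb => ?_)
  · refine haa i ?_
    by_contra hi3
    exact hiT (Finset.mem_sdiff.mpr ⟨hiU, hi3⟩)
  · rw [hA b b' fun i hi => hbb i (Finset.mem_union_left _ hi),
      hh b b' fun i hi => hbb i (Finset.mem_union_right _ hi)]

end Aux2
section Aux3
variable {ι : Type*} [Fintype ι] [DecidableEq ι] {d : ι → ℕ}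

lemma pmr_expand_ite (P : Prop) [Decidable P] (f : (∀ i, Fin (d i)) → ℝ) :
    (if P then ∑ c : ∀ i, Fin (d i), f c else 0) = ∑ c : ∀ i, Fin (d i), if P then f c else 0 := by
  split <;> simp

lemma pmr_tmul_tmul (s1 s2 s3 s4 : Finset ι) (h3 : s3 ⊆ s1 ∪ s2)
    (h4 : s4 ∩ (s1 ∪ s2) = ∅) (A Cbar h : (∀ i, Fin (d i)) → ℝ)
    (hCbar : TensorDependsOn d (s4 ∪ s3) Cbar) (hh : TensorDependsOn d s2 h) :
    tmul d (s4 ∪ s2) s2 s4 (tmul d (s4 ∪ s3) s1 (s4 ∪ s2) Cbar A) h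
      = tmul d (s4 ∪ s3) s3 s4 Cbar (tmul d s1 s2 s3 A h) := by
  have h4' : ∀ i ∈ s4, i ∉ s1 ∪ s2 := by
    intro i hi hi'
    have : i ∈ s4 ∩ (s1 ∪ s2) := Finset.mem_inter.mpr ⟨hi, hi'⟩
    rw [h4] at this; exact absurd this (Finset.notMem_empty i)
  have ht : (s4 ∪ s2 ∪ s2) \ s4 = s2 := by
    ext i; simp only [Finset.mem_sdiff, Finset.mem_union]
    constructor
    · tauto
    · intro hi; exact ⟨Or.inl (Or.inr hi), fun h4i => h4' i h4i (Finset.mem_union_right _ hi)⟩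
  have hu : (s4 ∪ s3 ∪ s1) \ (s4 ∪ s2) = s1 \ s2 := by
    ext i
    simp only [Finset.mem_sdiff, Finset.mem_union, not_or]
    constructor
    · rintro ⟨h1, h2, h3'⟩
      rcases h1 with (h1 | h1) | h1
      · exact absurd h1 h2
      · rcases Finset.mem_union.mp (h3 h1) with h | h
        · exact ⟨h, h3'⟩
        · exact absurd h h3'
      · exact ⟨h1, h3'⟩
    · rintro ⟨h1, h2⟩
      exact ⟨Or.inr h1, fun h4i => h4' i h4i (Finset.mem_union_left _ h1), h2⟩
  have ht' : (s4 ∪ s3 ∪ s3) \ s4 = s3 := by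
    ext i; simp only [Finset.mem_sdiff, Finset.mem_union]
    constructor
    · tauto
    · intro hi; exact ⟨Or.inl (Or.inr hi), fun h4i => h4' i h4i (h3 hi)⟩
  funext a
  simp only [tmul, ht, hu, ht']
  -- expand LHS into a double sum and collapse
  have LHS :
      (∑ b : ∀ i, Fin (d i), if (∀ i, i ∉ s2 → b i = a i) then
        (∑ c : ∀ i, Fin (d i), if (∀ i, i ∉ s1 \ s2 → c i = b i) then Cbar c * A c else 0) * h b
        else 0)
      = ∑ c : ∀ i, Fin (d i), if (∀ i, i ∉ s1 ∪ s2 → c i = a i)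
          then Cbar c * A c * h c else 0 := by
    have step : ∀ b : ∀ i, Fin (d i),
        (if (∀ i, i ∉ s2 → b i = a i) then
          (∑ c : ∀ i, Fin (d i), if (∀ i, i ∉ s1 \ s2 → c i = b i) then Cbar c * A c else 0) * h b
          else 0)
        = ∑ c : ∀ i, Fin (d i),
            if (∀ i, i ∉ s2 → b i = a i) ∧ (∀ i, i ∉ s1 \ s2 → c i = b i)
              then Cbar c * A c * h b else 0 := by
      intro b
      rw [Finset.sum_mul, pmr_expand_ite]
      refine Finset.sum_congr rfl fun c _ => ?_
      by_cases hP : ∀ i, i ∉ s2 → b i = a i <;> by_cases hQ : ∀ i, i ∉ s1 \ s2 → c i = b i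
      · rw [if_pos hP, if_pos hQ, if_pos ⟨hP, hQ⟩]
      · rw [if_pos hP, if_neg hQ, if_neg (fun hx => hQ hx.2), zero_mul]
      · rw [if_neg hP, if_neg (fun hx => hP hx.1)]
      · rw [if_neg hP, if_neg (fun hx => hP hx.1)]
    rw [Finset.sum_congr rfl fun b _ => step b,
      pmr_sum_collapse s2 (s1 \ s2) (fun i hi2 hi12 => (Finset.mem_sdiff.mp hi12).2 hi2) a
        (fun b c => Cbar c * A c * h b)]
    have hset : s2 ∪ s1 \ s2 = s1 ∪ s2 := by
      ext i; simp only [Finset.mem_union, Finset.mem_sdiff]; tauto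
    rw [hset]
    refine Finset.sum_congr rfl fun c _ => ?_
    split
    · congr 1
      refine hh _ _ fun i hi => ?_
      have : i ∉ s1 \ s2 := fun hmem => (Finset.mem_sdiff.mp hmem).2 hi
      simp [this]
    · rfl
  have RHS :
      (∑ k : ∀ i, Fin (d i), if (∀ i, i ∉ s3 → k i = a i) then
        Cbar k * ∑ m : ∀ i, Fin (d i), if (∀ i, i ∉ (s1 ∪ s2) \ s3 → m i = k i) then A m * h m else 0
        else 0)
      = ∑ m : ∀ i, Fin (d i), if (∀ i, i ∉ s1 ∪ s2 → m i = a i)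
          then Cbar m * A m * h m else 0 := by
    have step : ∀ k : ∀ i, Fin (d i),
        (if (∀ i, i ∉ s3 → k i = a i) then
          Cbar k * ∑ m : ∀ i, Fin (d i), if (∀ i, i ∉ (s1 ∪ s2) \ s3 → m i = k i) then A m * h m else 0
          else 0)
        = ∑ m : ∀ i, Fin (d i),
            if (∀ i, i ∉ s3 → k i = a i) ∧ (∀ i, i ∉ (s1 ∪ s2) \ s3 → m i = k i)
              then Cbar k * (A m * h m) else 0 := by
      intro k
      rw [Finset.mul_sum, pmr_expand_ite]
      refine Finset.sum_congr rfl fun m _ => ?_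
      by_cases hP : ∀ i, i ∉ s3 → k i = a i <;>
        by_cases hQ : ∀ i, i ∉ (s1 ∪ s2) \ s3 → m i = k i
      · rw [if_pos hP, if_pos hQ, if_pos ⟨hP, hQ⟩]
      · rw [if_pos hP, if_neg hQ, if_neg (fun hx => hQ hx.2), mul_zero]
      · rw [if_neg hP, if_neg (fun hx => hP hx.1)]
      · rw [if_neg hP, if_neg (fun hx => hP hx.1)]
    rw [Finset.sum_congr rfl fun k _ => step k,
      pmr_sum_collapse s3 ((s1 ∪ s2) \ s3) (fun i hi3 hi => (Finset.mem_sdiff.mp hi).2 hi3) a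
        (fun k m => Cbar k * (A m * h m))]
    have hset : s3 ∪ (s1 ∪ s2) \ s3 = s1 ∪ s2 := by
      ext i; simp only [Finset.mem_union, Finset.mem_sdiff]
      constructor
      · rintro (hi | ⟨hi, _⟩)
        · exact Finset.mem_union.mp (h3 hi)
        · exact hi
      · intro hi; tauto
    rw [hset]
    refine Finset.sum_congr rfl fun m _ => ?_
    split
    · have hCeq : (Cbar fun i => if i ∈ (s1 ∪ s2) \ s3 then a i else m i) = Cbar m := by
        refine hCbar _ _ fun i hi => ?_
        have : i ∉ (s1 ∪ s2) \ s3 := by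
          intro hmem
          rcases Finset.mem_sdiff.mp hmem with ⟨hi12, hi3⟩
          rcases Finset.mem_union.mp hi with hi4 | hi3'
          · exact h4' i hi4 hi12
          · exact hi3 hi3'
        simp [this]
      rw [hCeq, mul_assoc]
    · rfl
  rw [LHS, RHS]

end Aux3
section Aux4
variable {ι : Type*} [Fintype ι] [DecidableEq ι] {d : ι → ℕ} [∀ i, NeZero (d i)]

lemma pmr_tnorm_nonneg (s : Finset ι) (A : (∀ i, Fin (d i)) → ℝ) : 0 ≤ tnorm d s A :=
  Real.sqrt_nonneg _

lemma pmr_tnorm_zero (s : Finset ι) : tnorm d s (0 : (∀ i, Fin (d i)) → ℝ) = 0 := by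
  simp [tnorm]

lemma pmr_abs_le_tnorm (s : Finset ι) (h : (∀ i, Fin (d i)) → ℝ) (hh : TensorDependsOn d s h)
    (b : ∀ i, Fin (d i)) : |h b| ≤ tnorm d s h := by
  set p : ∀ i, Fin (d i) := fun i => if i ∈ s then b i else 0 with hp
  have hb : h b = h p := hh b p fun i hi => by simp [hp, hi]
  have hcond : ∀ i, i ∉ s → p i = 0 := fun i hi => by simp [hp, hi]
  have hsum : h p ^ 2 ≤ ∑ a : ∀ i, Fin (d i), if (∀ i, i ∉ s → a i = 0) then h a ^ 2 else 0 := by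
    have h1 := Finset.single_le_sum
      (f := fun a : ∀ i, Fin (d i) => if (∀ i, i ∉ s → a i = 0) then h a ^ 2 else 0)
      (fun a _ => by positivity) (Finset.mem_univ p)
    refine le_trans (le_of_eq ?_) h1
    exact (if_pos hcond).symm
  rw [hb]
  exact Real.abs_le_sqrt hsum

lemma pmr_tnorm_pos (s : Finset ι) (h : (∀ i, Fin (d i)) → ℝ) (hh : TensorDependsOn d s h)
    (h0 : h ≠ 0) : 0 < tnorm d s h := by
  obtain ⟨b, hb⟩ : ∃ b, h b ≠ 0 := by
    by_contra hc
    push_neg at hc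
    exact h0 (funext fun b => hc b)
  calc (0 : ℝ) < |h b| := abs_pos.mpr hb
    _ ≤ tnorm d s h := pmr_abs_le_tnorm s h hh b

lemma pmr_tnorm_tmul_le (s1 s2 s3 : Finset ι) (A h : (∀ i, Fin (d i)) → ℝ)
    (hh : TensorDependsOn d s2 h) :
    tnorm d s3 (tmul d s1 s2 s3 A h) ≤
      (Real.sqrt (Fintype.card (∀ i, Fin (d i))) * ∑ b : ∀ i, Fin (d i), |A b|)
        * tnorm d s2 h := by
  set K : ℝ := ∑ b : ∀ i, Fin (d i), |A b| with hK
  have hK0 : 0 ≤ K := Finset.sum_nonneg fun b _ => abs_nonneg _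
  set T : ℝ := tnorm d s2 h with hT
  have hT0 : 0 ≤ T := pmr_tnorm_nonneg _ _
  have hpt : ∀ a, |tmul d s1 s2 s3 A h a| ≤ K * T := by
    intro a
    calc |tmul d s1 s2 s3 A h a|
        ≤ ∑ b : ∀ i, Fin (d i),
            |if (∀ i, i ∉ (s1 ∪ s2) \ s3 → b i = a i) then A b * h b else 0| :=
          Finset.abs_sum_le_sum_abs _ _
      _ ≤ ∑ b : ∀ i, Fin (d i), |A b| * T := by
          refine Finset.sum_le_sum fun b _ => ?_
          split
          · rw [abs_mul]
            exact mul_le_mul_of_nonneg_left (pmr_abs_le_tnorm s2 h hh b) (abs_nonneg _)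
          · simp only [abs_zero]
            positivity
      _ = K * T := by rw [hK, Finset.sum_mul]
  have : tnorm d s3 (tmul d s1 s2 s3 A h) ≤
      Real.sqrt (∑ _a : ∀ i, Fin (d i), (K * T) ^ 2) := by
    refine Real.sqrt_le_sqrt (Finset.sum_le_sum fun a _ => ?_)
    split
    · calc tmul d s1 s2 s3 A h a ^ 2 = |tmul d s1 s2 s3 A h a| ^ 2 := (sq_abs _).symm
        _ ≤ (K * T) ^ 2 := by
            apply pow_le_pow_left₀ (abs_nonneg _) (hpt a)
    · positivity
  refine this.trans ?_
  rw [Finset.sum_const, Finset.card_univ, nsmul_eq_mul, Real.sqrt_mul (by positivity),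
    Real.sqrt_sq (by positivity), mul_assoc]

end Aux4
section Aux5
variable {ι : Type*} [Fintype ι] [DecidableEq ι] {d : ι → ℕ}

lemma pmr_continuous_tmul (s1 s2 s3 : Finset ι) (A : (∀ i, Fin (d i)) → ℝ) :
    Continuous (fun h => tmul d s1 s2 s3 A h) := by
  apply continuous_pi
  intro a
  simp only [tmul]
  apply continuous_finset_sum
  intro b _
  have heq : (fun h : (∀ i, Fin (d i)) → ℝ =>
      if (∀ i, i ∉ (s1 ∪ s2) \ s3 → b i = a i) then A b * h b else 0)
      = fun h => (if (∀ i, i ∉ (s1 ∪ s2) \ s3 → b i = a i) then A b else 0) * h b := by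
    funext h; split <;> simp
  rw [heq]
  exact continuous_const.mul (continuous_apply b)

end Aux5
/-- Pullback through a multiplication node, right argument (Theorem 4, first part):
let `A` be a fixed tensor with index set `s1`, and let `Y` map tensors with index set `s3`
to tensors with index set `s4` (with `s4` disjoint from `s1 ∪ s2`), having derivative
tensor `Cbar` at the point `C = A *_(s1, s2, s3) B`. Then `B ↦ Y(A *_(s1, s2, s3) B)`
has derivative tensor `Cbar *_(s4s3, s1, s4s2) A` at `B`. -/
theorem pullback_mul_right {ι : Type*} [Fintype ι] [DecidableEq ι] (d : ι → ℕ)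
    [∀ i, NeZero (d i)] (s1 s2 s3 s4 : Finset ι)
    (h3 : s3 ⊆ s1 ∪ s2) (h4 : s4 ∩ (s1 ∪ s2) = ∅)
    (A B Cbar : (∀ i, Fin (d i)) → ℝ)
    (Y : ((∀ i, Fin (d i)) → ℝ) → ((∀ i, Fin (d i)) → ℝ))
    (hA : TensorDependsOn d s1 A) (hB : TensorDependsOn d s2 B)
    (hY : ∀ z, TensorDependsOn d s4 (Y z))
    (hCbar : TensorDependsOn d (s4 ∪ s3) Cbar)
    (hdY : HasDerivTensor d s3 s4 Y (tmul d s1 s2 s3 A B) Cbar) :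
    HasDerivTensor d s2 s4 (fun B' => Y (tmul d s1 s2 s3 A B')) B
      (tmul d (s4 ∪ s3) s1 (s4 ∪ s2) Cbar A) := by
  classical
  set L : ((∀ i, Fin (d i)) → ℝ) → ((∀ i, Fin (d i)) → ℝ) := fun h => tmul d s1 s2 s3 A h
    with hLdef
  set C : (∀ i, Fin (d i)) → ℝ := tmul d s1 s2 s3 A B with hCdef
  set E : ((∀ i, Fin (d i)) → ℝ) → ((∀ i, Fin (d i)) → ℝ) :=
    fun k => Y (C + k) - Y C - tmul d (s4 ∪ s3) s3 s4 Cbar k with hEdef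
  set g : ((∀ i, Fin (d i)) → ℝ) → ℝ :=
    fun k => if k = 0 then 0 else tnorm d s4 (E k) / tnorm d s3 k with hgdef
  set M : ℝ := Real.sqrt (Fintype.card (∀ i, Fin (d i))) * ∑ b : ∀ i, Fin (d i), |A b|
    with hMdef
  have hM0 : 0 ≤ M := by
    rw [hMdef]
    have : (0:ℝ) ≤ ∑ b : ∀ i, Fin (d i), |A b| := Finset.sum_nonneg fun b _ => abs_nonneg _
    positivity
  -- Step 1: g tends to 0 within the set of tensors depending on s3
  have step1 : Tendsto g (nhdsWithin 0 {k | TensorDependsOn d s3 k}) (nhds 0) := by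
    have hsub : {k : (∀ i, Fin (d i)) → ℝ | TensorDependsOn d s3 k}
        ⊆ {k | TensorDependsOn d s3 k ∧ k ≠ 0} ∪ {0} := by
      intro k hk
      by_cases h0 : k = 0
      · exact Or.inr h0
      · exact Or.inl ⟨hk, h0⟩
    refine Tendsto.mono_left ?_ (nhdsWithin_mono 0 hsub)
    rw [nhdsWithin_union]
    refine Tendsto.sup ?_ ?_
    · refine Tendsto.congr' ?_ hdY
      filter_upwards [self_mem_nhdsWithin] with k hk
      rw [hgdef]
      simp only
      rw [if_neg hk.2]
    · rw [nhdsWithin_singleton]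
      have hg0 : g 0 = 0 := by rw [hgdef]; simp
      simpa [hg0] using tendsto_pure_nhds g 0
  -- Step 2: composition with L
  have hL0 : L 0 = 0 := pmr_tmul_zero_right s1 s2 s3 A
  have step2 : Tendsto (fun h => g (L h))
      (nhdsWithin 0 {h | TensorDependsOn d s2 h ∧ h ≠ 0}) (nhds 0) := by
    refine step1.comp (tendsto_nhdsWithin_iff.mpr ⟨?_, ?_⟩)
    · exact ((pmr_continuous_tmul s1 s2 s3 A).tendsto' 0 0 hL0).mono_left nhdsWithin_le_nhds
    · filter_upwards [self_mem_nhdsWithin] with h hh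
      exact pmr_dependsOn_tmul s1 s2 s3 h3 A h hA hh.1
  -- Step 3: squeeze
  rw [HasDerivTensor]
  have congrq : (fun h => tnorm d s4 (E (L h)) / tnorm d s2 h)
      =ᶠ[nhdsWithin (0 : (∀ i, Fin (d i)) → ℝ) {h | TensorDependsOn d s2 h ∧ h ≠ 0}]
      (fun h => tnorm d s4 (Y (tmul d s1 s2 s3 A (B + h))
        - Y (tmul d s1 s2 s3 A B)
        - tmul d (s4 ∪ s2) s2 s4 (tmul d (s4 ∪ s3) s1 (s4 ∪ s2) Cbar A) h) / tnorm d s2 h) := by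
    filter_upwards [self_mem_nhdsWithin] with h hh
    have e1 : tmul d s1 s2 s3 A (B + h) = C + L h := pmr_tmul_add_right s1 s2 s3 A B h
    have e2 : tmul d (s4 ∪ s2) s2 s4 (tmul d (s4 ∪ s3) s1 (s4 ∪ s2) Cbar A) h
        = tmul d (s4 ∪ s3) s3 s4 Cbar (L h) :=
      pmr_tmul_tmul s1 s2 s3 s4 h3 h4 A Cbar h hCbar hh.1
    simp only [e1, e2, hEdef]
    rfl
  refine Tendsto.congr' congrq (squeeze_zero' (g := fun h => M * g (L h)) ?_ ?_ ?_)
  · filter_upwards with h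
    exact div_nonneg (pmr_tnorm_nonneg _ _) (pmr_tnorm_nonneg _ _)
  · filter_upwards [self_mem_nhdsWithin] with h hh
    by_cases hLh : L h = 0
    · have hE0 : E (L h) = 0 := by
        rw [hLh, hEdef]
        simp [pmr_tmul_zero_right]
      rw [hE0, pmr_tnorm_zero, zero_div, hLh]
      have : g 0 = 0 := by rw [hgdef]; simp
      rw [this, mul_zero]
    · have hdep3 : TensorDependsOn d s3 (L h) := pmr_dependsOn_tmul s1 s2 s3 h3 A h hA hh.1
      have hpos3 : 0 < tnorm d s3 (L h) := pmr_tnorm_pos s3 (L h) hdep3 hLh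
      have hpos2 : 0 < tnorm d s2 h := pmr_tnorm_pos s2 h hh.1 hh.2
      have hgq : g (L h) = tnorm d s4 (E (L h)) / tnorm d s3 (L h) := by
        rw [hgdef]; simp only; rw [if_neg hLh]
      have hb : tnorm d s3 (L h) ≤ M * tnorm d s2 h :=
        pmr_tnorm_tmul_le s1 s2 s3 A h hh.1
      have h1 : tnorm d s4 (E (L h)) / tnorm d s2 h
          = (tnorm d s4 (E (L h)) / tnorm d s3 (L h)) * (tnorm d s3 (L h) / tnorm d s2 h) := by
        rw [div_mul_div_comm, mul_comm (tnorm d s4 (E (L h))) (tnorm d s3 (L h)),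
          mul_div_mul_left _ _ hpos3.ne']
      rw [h1, hgq, mul_comm M]
      refine mul_le_mul_of_nonneg_left ?_
        (div_nonneg (pmr_tnorm_nonneg _ _) hpos3.le)
      rw [div_le_iff₀ hpos2]
      exact hb
  · have := step2.const_mul M
    simpa using this
end
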